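/- arXiv:2006.07959 — 6 statements merged into one kernel-verified Lean document; each statement's English description precedes it below -/
import Mathlib

section
/- Let d, M be positive integers and K₀ ⊂ ℂ a set with at least M+1 points. Suppose (x_n) is a sequence of d×d matrices whose entries are complex polynomials of degree at most M. If there are r ≥ 1 and s ∈ {0,…,r−1} so that for each z ∈ K₀ the sequence (x_n(z)) satisfies Σ_n ‖Δ^j x_n(z)‖^{r/(j+s)} < ∞ for all j ∈ {1,…,r−s} and is bounded, then for every compact K ⊂ ℂ the sequence (x_n), viewed as continuous matrix-valued functions on K with supremum norm, is bounded and satisfies Σ_n (sup_{z∈K} ‖Δ^j x_n(z)‖)^{r/(j+s)} < ∞ for all j ∈ {1,…,r−s}. -/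
attribute [local instance] Matrix.normedAddCommGroup

/-- Forward difference operator on sequences. -/
def fdiff {A : Type*} [AddCommGroup A] (x : ℕ → A) : ℕ → A := fun n => x (n + 1) - x n

attribute [local instance] Matrix.normedSpace
set_option maxHeartbeats 1000000

/-- `fdiff` iterated commutes with finite linear combinations. -/
lemma fdiff_iterate_lincomb {A : Type*} [AddCommGroup A] [Module ℂ A]
    {ι : Type*} (S : Finset ι) (c : ι → ℂ) (y : ι → ℕ → A) :
    ∀ j : ℕ, fdiff^[j] (fun m => ∑ w ∈ S, c w • y w m)
      = fun n => ∑ w ∈ S, c w • fdiff^[j] (y w) n := by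
  intro j
  induction j generalizing y with
  | zero => simp
  | succ j ih =>
    rw [Function.iterate_succ_apply]
    have h1 : fdiff (fun m => ∑ w ∈ S, c w • y w m)
        = fun m => ∑ w ∈ S, c w • fdiff (y w) m := by
      funext n
      simp [fdiff, Finset.sum_sub_distrib, smul_sub]
    rw [h1, ih (fun w => fdiff (y w))]
    funext n
    simp [Function.iterate_succ_apply]

/-- Lagrange expansion of the evaluated matrix. -/
lemma matrix_lagrange {d : ℕ} (S : Finset ℂ)
    (A : Matrix (Fin d) (Fin d) (Polynomial ℂ))
    (hdeg : ∀ i j, (A i j).degree < S.card) (z : ℂ) :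
    A.map (Polynomial.eval z)
      = ∑ w ∈ S, ((Lagrange.basis S id w).eval z) • A.map (Polynomial.eval w) := by
  ext i j
  simp only [Matrix.map_apply, Matrix.sum_apply, Matrix.smul_apply, smul_eq_mul]
  have h := Lagrange.eq_interpolate (f := A i j) (v := id) (s := S)
    (Set.injOn_id _) (hdeg i j)
  conv_lhs => rw [h]
  simp [Lagrange.interpolate, Polynomial.eval_finset_sum, mul_comm]

/-- If a sequence of matrices of polynomials of degree at most `M` is, pointwise at `M+1`
distinct points of `K₀`, bounded and lies in the Stolz class `𝓓_{r,s}`, then it does so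
uniformly on every compact subset `K` of `ℂ`. -/
theorem stolz_of_pointwise_polynomial
    (d M : ℕ) (hd : 0 < d) (hM : 0 < M) (K₀ : Set ℂ)
    (hK₀ : ∃ S : Finset ℂ, ↑S ⊆ K₀ ∧ S.card = M + 1)
    (x : ℕ → Matrix (Fin d) (Fin d) (Polynomial ℂ))
    (hdeg : ∀ n i j, (x n i j).degree ≤ M)
    (r : ℕ) (hr : 1 ≤ r) (s : ℕ) (hs : s ≤ r - 1)
    (hbdd : ∀ z ∈ K₀, ∃ C : ℝ, ∀ n,
      ‖(x n).map (Polynomial.eval z)‖ ≤ C)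
    (hsum : ∀ z ∈ K₀, ∀ j, 1 ≤ j → j ≤ r - s →
      Summable (fun n =>
        ‖fdiff^[j] (fun m => (x m).map (Polynomial.eval z)) n‖ ^ ((r : ℝ) / (j + s)))) :
    ∀ K : Set ℂ, IsCompact K →
      (∃ C : ℝ, ∀ n, ∀ z ∈ K, ‖(x n).map (Polynomial.eval z)‖ ≤ C) ∧
      (∀ j, 1 ≤ j → j ≤ r - s →
        Summable (fun n =>
          (⨆ z : K, ‖fdiff^[j] (fun m => (x m).map (Polynomial.eval (z : ℂ))) n‖)
            ^ ((r : ℝ) / (j + s)))) := by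
  obtain ⟨S, hSK₀, hScard⟩ := hK₀
  have hSne : S.Nonempty := Finset.card_pos.mp (by omega)
  have hdeg' : ∀ n i j, (x n i j).degree < S.card := by
    intro n i j
    refine lt_of_le_of_lt (hdeg n i j) ?_
    rw [hScard]
    exact_mod_cast Nat.lt_succ_self M
  intro K hK
  -- bound on the Lagrange basis polynomials on K
  have hB : ∀ w ∈ S, ∃ B : ℝ, 0 ≤ B ∧ ∀ z ∈ K, ‖(Lagrange.basis S id w).eval z‖ ≤ B := by
    intro w _
    obtain ⟨C, hC⟩ := hK.exists_bound_of_continuousOn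
      (f := fun z => (Lagrange.basis S id w).eval z)
      (Polynomial.continuous _).continuousOn
    exact ⟨max C 0, le_max_right _ _, fun z hz => le_trans (hC z hz) (le_max_left _ _)⟩
  choose B hB0 hBle using hB
  -- uniform bound B₀ over all w ∈ S
  set B₀ : ℝ := ∑ w ∈ S.attach, B w w.2 with hB₀def
  have hB₀0 : 0 ≤ B₀ := Finset.sum_nonneg fun w _ => hB0 w w.2
  have hB₀le : ∀ w (hw : w ∈ S), B w hw ≤ B₀ := by
    intro w hw
    exact Finset.single_le_sum (f := fun w : {a // a ∈ S} => B w w.2)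
      (fun v _ => hB0 v v.2) (Finset.mem_attach _ ⟨w, hw⟩)
  have hub : ∀ w ∈ S, ∀ z ∈ K, ‖(Lagrange.basis S id w).eval z‖ ≤ B₀ := by
    intro w hw z hz
    exact le_trans (hBle w hw z hz) (hB₀le w hw)
  constructor
  · -- boundedness
    have h1 : ∀ w ∈ S, ∃ C : ℝ, 0 ≤ C ∧ ∀ n, ‖(x n).map (Polynomial.eval w)‖ ≤ C := by
      intro w hw
      obtain ⟨C, hC⟩ := hbdd w (hSK₀ hw)
      exact ⟨max C 0, le_max_right _ _, fun n => le_trans (hC n) (le_max_left _ _)⟩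
    choose C hC0 hCle using h1
    refine ⟨∑ w ∈ S.attach, B₀ * C w w.2, ?_⟩
    intro n z hz
    rw [matrix_lagrange S (x n) (hdeg' n) z, ← Finset.sum_attach S
      (fun w => ((Lagrange.basis S id w).eval z) • (x n).map (Polynomial.eval w))]
    refine le_trans (norm_sum_le _ _) (Finset.sum_le_sum ?_)
    intro w _
    rw [norm_smul]
    exact mul_le_mul (hub w w.2 z hz) (hCle w w.2 n) (norm_nonneg _) hB₀0
  · -- summability
    intro j hj1 hj2
    set p : ℝ := (r : ℝ) / (j + s) with hp
    have hp0 : 0 ≤ p := by positivity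
    set N : ℝ := (S.card : ℝ) with hN
    have hN0 : 0 ≤ N := Nat.cast_nonneg _
    -- the dominating summable function
    set g : ℕ → ℝ := fun n => ∑ w ∈ S.attach,
      ((N * B₀) * ‖fdiff^[j] (fun m => (x m).map (Polynomial.eval (w : ℂ))) n‖) ^ p with hg
    have hgsum : Summable g := by
      refine summable_sum fun w _ => ?_
      have h : Summable (fun n =>
          ‖fdiff^[j] (fun m => (x m).map (Polynomial.eval (w : ℂ))) n‖ ^ p) :=
        hsum (w : ℂ) (hSK₀ w.2) j hj1 hj2
      refine (h.mul_left ((N * B₀) ^ p)).congr fun n => ?_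
      rw [← Real.mul_rpow (by positivity) (norm_nonneg _)]
    refine Summable.of_nonneg_of_le (fun n => ?_) (fun n => ?_) hgsum
    · exact Real.rpow_nonneg (Real.iSup_nonneg fun z => norm_nonneg _) _
    · -- pointwise domination
      set a : ℂ → ℝ := fun w => ‖fdiff^[j] (fun m => (x m).map (Polynomial.eval w)) n‖ with ha
      obtain ⟨w₀, hw₀S, hw₀max⟩ := Finset.exists_max_image S a hSne
      have ha0 : ∀ w, 0 ≤ a w := fun w => norm_nonneg _
      -- the sup is bounded by N * B₀ * a w₀
      have hsup : (⨆ z : K, ‖fdiff^[j] (fun m => (x m).map (Polynomial.eval (z : ℂ))) n‖)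
          ≤ (N * B₀) * a w₀ := by
        refine Real.iSup_le (fun z => ?_) (by positivity)
        have hexp : (fun m => (x m).map (Polynomial.eval (z : ℂ)))
            = fun m => ∑ w ∈ S, ((Lagrange.basis S id w).eval (z : ℂ)) •
                (fun m' => (x m').map (Polynomial.eval w)) m := by
          funext m
          exact matrix_lagrange S (x m) (hdeg' m) (z : ℂ)
        rw [hexp, fdiff_iterate_lincomb S _ _ j]
        calc ‖∑ w ∈ S, ((Lagrange.basis S id w).eval (z : ℂ)) •
              fdiff^[j] (fun m' => (x m').map (Polynomial.eval w)) n‖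
            ≤ ∑ w ∈ S, ‖((Lagrange.basis S id w).eval (z : ℂ)) •
              fdiff^[j] (fun m' => (x m').map (Polynomial.eval w)) n‖ := norm_sum_le _ _
          _ ≤ ∑ w ∈ S, B₀ * a w₀ := by
              refine Finset.sum_le_sum fun w hw => ?_
              rw [norm_smul]
              exact mul_le_mul (hub w hw (z : ℂ) z.2)
                (le_trans (le_of_eq rfl) (hw₀max w hw)) (ha0 w) hB₀0
          _ = (N * B₀) * a w₀ := by
              rw [Finset.sum_const, hN, nsmul_eq_mul]; ring
      have h1 : (⨆ z : K, ‖fdiff^[j] (fun m => (x m).map (Polynomial.eval (z : ℂ))) n‖) ^ p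
          ≤ ((N * B₀) * a w₀) ^ p :=
        Real.rpow_le_rpow (Real.iSup_nonneg fun z => norm_nonneg _) hsup hp0
      have h2 : ((N * B₀) * a w₀) ^ p ≤ g n := by
        rw [hg]
        have h3 := Finset.single_le_sum
          (f := fun w : {a // a ∈ S} =>
            ((N * B₀) * ‖fdiff^[j] (fun m => (x m).map (Polynomial.eval ((w : ℂ)))) n‖) ^ p)
          (fun w _ => by positivity) (Finset.mem_attach _ ⟨w₀, hw₀S⟩)
        simpa [ha] using h3
      exact le_trans h1 h2
end

section
/- Let (γ_n : n ∈ ℕ) and (ã_n : n ∈ ℕ₀) be positive sequences with γ_n → ∞ and γ_n(1 − ã_{n−1}/ã_n) → κ for some κ > 0. If γ_n/n → 0, then Σ_{n=0}^∞ 1/ã_n < ∞. -/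
open Filter

/-- If `γ_n → ∞`, `γ_n (1 − ã_{n−1}/ã_n) → κ > 0` and `γ_n / n → 0`, then
`∑ 1/ã_n < ∞`. -/
theorem summable_inv_of_gamma_div_n_tendsto_zero
    (γ : ℕ → ℝ) (a : ℕ → ℝ) (κ : ℝ) (hκ : 0 < κ)
    (hγpos : ∀ n, 0 < γ n) (hapos : ∀ n, 0 < a n)
    (hγ : Tendsto γ atTop atTop)
    (hlim : Tendsto (fun n => γ (n + 1) * (1 - a n / a (n + 1))) atTop (nhds κ))
    (hsmall : Tendsto (fun n => γ n / n) atTop (nhds 0)) :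
    Summable (fun n => 1 / a n) := by
  have h1 : ∀ᶠ n in atTop, κ / 2 < γ (n + 1) * (1 - a n / a (n + 1)) :=
    hlim.eventually (eventually_gt_nhds (by linarith))
  have h2 : ∀ᶠ n in atTop, γ n / (n : ℝ) < κ / 4 :=
    hsmall.eventually (eventually_lt_nhds (by linarith))
  obtain ⟨N1, hN1⟩ := h1.exists_forall_of_atTop
  obtain ⟨N2, hN2⟩ := h2.exists_forall_of_atTop
  set N := max 2 (max N1 N2) with hNdef
  have hN2le : (2 : ℕ) ≤ N := le_max_left _ _
  -- key step inequality
  have key : ∀ n, N ≤ n → a n / a (n + 1) ≤ ((n : ℝ) - 1) / ((n : ℝ) + 1) := by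
    intro n hn
    have hn1 : N1 ≤ n := le_trans (le_trans (le_max_left _ _) (le_max_right _ _)) hn
    have hn2 : N2 ≤ n + 1 :=
      le_trans (le_trans (le_trans (le_max_right _ _) (le_max_right _ _)) hn) (Nat.le_succ n)
    have hA := hN1 n hn1
    have hB := hN2 (n + 1) hn2
    have hnr : (2 : ℝ) ≤ (n : ℝ) := by exact_mod_cast le_trans hN2le hn
    have hγp := hγpos (n + 1)
    push_cast at hB
    have hγlt : γ (n + 1) < κ / 4 * ((n : ℝ) + 1) := by
      have hpos : (0 : ℝ) < (n : ℝ) + 1 := by linarith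
      rw [div_lt_iff₀ hpos] at hB
      linarith
    have hfrac : 2 / ((n : ℝ) + 1) < 1 - a n / a (n + 1) := by
      have h3 : κ / 2 < γ (n + 1) * (1 - a n / a (n + 1)) := hA
      have h4 : γ (n + 1) * (2 / ((n : ℝ) + 1)) < κ / 2 := by
        rw [mul_div_assoc'] at *
        rw [div_lt_div_iff₀ (by linarith) (by norm_num)]
        nlinarith
      nlinarith [mul_pos hγp (show (0:ℝ) < 2 / ((n : ℝ) + 1) by positivity)]
    have : a n / a (n + 1) < 1 - 2 / ((n : ℝ) + 1) := by linarith
    have heq : 1 - 2 / ((n : ℝ) + 1) = ((n : ℝ) - 1) / ((n : ℝ) + 1) := by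
      field_simp
      ring
    linarith [heq ▸ this]
  -- monotone bound: n(n-1)/a n ≤ N(N-1)/a N for n ≥ N
  have bound : ∀ n, N ≤ n →
      (n : ℝ) * ((n : ℝ) - 1) * (1 / a n) ≤ (N : ℝ) * ((N : ℝ) - 1) * (1 / a N) := by
    intro n hn
    induction n, hn using Nat.le_induction with
    | base => exact le_rfl
    | succ n hn ih =>
      have hk := key n hn
      have hnr : (2 : ℝ) ≤ (n : ℝ) := by exact_mod_cast le_trans hN2le hn
      have ha1 := hapos n
      have ha2 := hapos (n + 1)
      have step : ((n : ℝ) + 1) * (n : ℝ) * (1 / a (n + 1)) ≤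
          (n : ℝ) * ((n : ℝ) - 1) * (1 / a n) := by
        rw [div_le_div_iff₀ ha2 (by linarith)] at hk
        rw [mul_one_div, mul_one_div, div_le_div_iff₀ ha2 ha1]
        nlinarith
      calc ((n + 1 : ℕ) : ℝ) * (((n + 1 : ℕ) : ℝ) - 1) * (1 / a (n + 1))
          = ((n : ℝ) + 1) * (n : ℝ) * (1 / a (n + 1)) := by push_cast; ring
        _ ≤ (n : ℝ) * ((n : ℝ) - 1) * (1 / a n) := step
        _ ≤ _ := ih
  set C := (N : ℝ) * ((N : ℝ) - 1) * (1 / a N) with hC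
  have hC0 : 0 ≤ C := by
    have h2N : (2 : ℝ) ≤ (N : ℝ) := by exact_mod_cast hN2le
    have haN : (0 : ℝ) < 1 / a N := div_pos one_pos (hapos N)
    rw [hC]
    exact mul_nonneg (mul_nonneg (by linarith) (by linarith)) haN.le
  -- summability via big-O comparison with 1/n^2
  apply summable_of_isBigO_nat (g := fun n => 1 / (n : ℝ) ^ 2)
    (Real.summable_one_div_nat_pow.2 one_lt_two)
  rw [Asymptotics.isBigO_iff]
  refine ⟨2 * C, eventually_atTop.2 ⟨N, fun n hn => ?_⟩⟩
  have hnr : (2 : ℝ) ≤ (n : ℝ) := by exact_mod_cast le_trans hN2le hn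
  have ha := hapos n
  have hb := bound n hn
  have hprod : (0 : ℝ) < (n : ℝ) * ((n : ℝ) - 1) := by nlinarith
  have h1a : 1 / a n ≤ C / ((n : ℝ) * ((n : ℝ) - 1)) := by
    rw [le_div_iff₀ hprod]
    nlinarith
  have h2a : C / ((n : ℝ) * ((n : ℝ) - 1)) ≤ 2 * C / (n : ℝ) ^ 2 := by
    rw [div_le_div_iff₀ hprod (by positivity)]
    nlinarith [mul_nonneg (mul_nonneg hC0 (by linarith : (0:ℝ) ≤ (n:ℝ)))
      (by linarith : (0:ℝ) ≤ (n:ℝ) - 2)]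
  have hfinal : 1 / a n ≤ 2 * C / (n : ℝ) ^ 2 := le_trans h1a h2a
  rw [Real.norm_eq_abs, Real.norm_eq_abs, abs_of_pos (by positivity),
    abs_of_pos (by positivity)]
  calc (1 : ℝ) / a n ≤ 2 * C / (n : ℝ) ^ 2 := hfinal
    _ = 2 * C * (1 / (n : ℝ) ^ 2) := by ring
end

section
/- Let (γ_n : n ∈ ℕ) and (ã_n : n ∈ ℕ₀) be positive sequences with γ_n → ∞ and γ_n(1 − ã_{n−1}/ã_n) → κ for some κ > 0. If γ_n/n → ∞, then Σ_{n=0}^∞ 1/ã_n = ∞. -/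
/-!
Since `γ_n / n → ∞` while `γ_n (1 − ã_{n−1}/ã_n)` stays bounded, eventually
`1 − ã_{n−1}/ã_n ≤ 1/n`, i.e. `ã_n / n` is eventually nonincreasing. Hence `ã_n = O(n)`
and `∑ 1/ã_n` dominates a multiple of the harmonic series.
-/

open Filter

theorem not_summable_one_div_of_eventually_le_const_mul {a : ℕ → ℝ} {C : ℝ}
    (ha : ∀ n, 0 < a n) (h : ∀ᶠ n : ℕ in atTop, a n ≤ C * n) :
    ¬ Summable (fun n => 1 / a n) := by
  intro hs
  refine Real.not_summable_one_div_natCast (hs.mul_left C |>.of_norm_bounded_eventually_nat ?_)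
  filter_upwards [h, eventually_ge_atTop 1] with n hn hn1
  have hn0 : (0 : ℝ) < n := by exact_mod_cast hn1
  rw [Real.norm_of_nonneg (by positivity), mul_one_div, div_le_div_iff₀ hn0 (ha n)]
  linarith

theorem exists_eventually_le_const_mul_of_eventually_mul_succ_le {a : ℕ → ℝ}
    (h : ∀ᶠ n : ℕ in atTop, a (n + 1) * n ≤ a n * (n + 1)) :
    ∃ C, ∀ᶠ n : ℕ in atTop, a n ≤ C * n := by
  obtain ⟨N, hN⟩ := (h.and (eventually_ge_atTop 1)).exists_forall_of_atTop
  have hN0 : (0 : ℝ) < N := by exact_mod_cast (hN N le_rfl).2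
  have hgrowth : ∀ n, N ≤ n → a n * N ≤ a N * n := by
    intro n hn
    induction n, hn using Nat.le_induction with
    | base => exact le_rfl
    | succ n hn ih =>
      obtain ⟨hstep, hn1⟩ := hN n hn
      have hn0 : (0 : ℝ) < n := by exact_mod_cast hn1
      refine le_of_mul_le_mul_right ?_ hn0
      push_cast
      nlinarith
  refine ⟨a N / N, eventually_atTop.2 ⟨N, fun n hn => ?_⟩⟩
  rw [div_mul_eq_mul_div, le_div_iff₀ hN0]
  exact hgrowth n hn

theorem mul_le_mul_succ_of_mul_one_sub_div_le {x y g c t : ℝ} (hy : 0 < y) (hc : 0 < c)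
    (ht : 0 ≤ t) (hg : c * (t + 1) ≤ g) (h : g * (1 - x / y) ≤ c) :
    y * t ≤ x * (t + 1) := by
  have hg0 : 0 < g := lt_of_lt_of_le (by positivity) hg
  have hratio : 1 - x / y ≤ 1 / (t + 1) :=
    calc 1 - x / y ≤ c / g := (le_div_iff₀' hg0).2 h
      _ ≤ 1 / (t + 1) := by rw [div_le_div_iff₀ hg0 (by positivity)]; linarith
  rw [one_sub_div hy.ne', div_le_div_iff₀ hy (by positivity)] at hratio
  linarith

theorem eventually_const_mul_le_of_tendsto_div_atTop {γ : ℕ → ℝ}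
    (h : Tendsto (fun n => γ n / n) atTop atTop) (c : ℝ) :
    ∀ᶠ n : ℕ in atTop, c * n ≤ γ n := by
  filter_upwards [h.eventually_ge_atTop c, eventually_ge_atTop 1] with n hn hn1
  rwa [le_div_iff₀ (by exact_mod_cast hn1)] at hn

theorem not_summable_inv_of_gamma_div_n_tendsto_atTop_general
    (γ : ℕ → ℝ) (a : ℕ → ℝ) (κ : ℝ)
    (hapos : ∀ n, 0 < a n)
    (hlim : Tendsto (fun n => γ (n + 1) * (1 - a n / a (n + 1))) atTop (nhds κ))
    (hbig : Tendsto (fun n => γ n / n) atTop atTop) :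
    ¬ Summable (fun n => 1 / a n) := by
  set c := |κ| + 1
  have hc : 0 < c := by positivity
  have hbounded : ∀ᶠ n in atTop, γ (n + 1) * (1 - a n / a (n + 1)) ≤ c :=
    hlim.eventually (eventually_le_nhds (by linarith [le_abs_self κ]))
  have hlarge : ∀ᶠ n : ℕ in atTop, c * ((n : ℝ) + 1) ≤ γ (n + 1) := by
    simpa using (tendsto_add_atTop_nat 1).eventually
      (eventually_const_mul_le_of_tendsto_div_atTop hbig c)
  have hstep : ∀ᶠ n : ℕ in atTop, a (n + 1) * n ≤ a n * (n + 1) := by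
    filter_upwards [hbounded, hlarge] with n hb hl
    exact mul_le_mul_succ_of_mul_one_sub_div_le (hapos _) hc n.cast_nonneg hl hb
  obtain ⟨C, hC⟩ := exists_eventually_le_const_mul_of_eventually_mul_succ_le hstep
  exact not_summable_one_div_of_eventually_le_const_mul hapos hC

/-- If `γ_n → ∞`, `γ_n (1 − ã_{n−1}/ã_n) → κ > 0` and `γ_n / n → ∞`, then
`∑ 1/ã_n = ∞`. -/
theorem not_summable_inv_of_gamma_div_n_tendsto_atTop
    (γ : ℕ → ℝ) (a : ℕ → ℝ) (κ : ℝ) (hκ : 0 < κ)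
    (hγpos : ∀ n, 0 < γ n) (hapos : ∀ n, 0 < a n)
    (hγ : Tendsto γ atTop atTop)
    (hlim : Tendsto (fun n => γ (n + 1) * (1 - a n / a (n + 1))) atTop (nhds κ))
    (hbig : Tendsto (fun n => γ n / n) atTop atTop) :
    ¬ Summable (fun n => 1 / a n) :=
  not_summable_inv_of_gamma_div_n_tendsto_atTop_general γ a κ hapos hlim hbig
end

section
/- Let a_n > 0 and b_n ∈ ℝ, let B_j(x) be the 2×2 transfer matrix with rows (0, 1) and (−a_{j−1}/a_j, (x − b_j)/a_j), and for a positive integer N set X_n(z) = B_{n+N−1}(z)⋯B_n(z). Let K ⊂ ℂ be compact with 0 ∈ K, and suppose sup_{n≥1} sup_{z∈K} ‖B_n(z)‖ < ∞. Then there is c > 0 with sup_{z∈K} ‖X_n(z) − X_n(0)‖ ≤ c Σ_{j=0}^{N−1} 1/a_{n+j} for all n. In particular, if Σ_n 1/a_n < ∞ then Σ_n sup_{z∈K} ‖X_n(z) − X_n(0)‖ < ∞. -/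
open Filter

attribute [local instance] Matrix.normedAddCommGroup

/-- Transfer matrix `B_j(z)` of a Jacobi matrix. -/
noncomputable def transfer (a : ℕ → ℝ) (b : ℕ → ℝ) (j : ℕ) (z : ℂ) : Matrix (Fin 2) (Fin 2) ℂ :=
  !![0, 1; -((a (j - 1) : ℝ) / a j : ℝ), (z - (b j : ℂ)) / (a j : ℂ)]

/-- `X_n(z) = B_{n+N−1}(z) ⋯ B_n(z)` (product in decreasing index order). -/
noncomputable def Xmat (a : ℕ → ℝ) (b : ℕ → ℝ) (N n : ℕ) (z : ℂ) : Matrix (Fin 2) (Fin 2) ℂ :=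
  ((List.range N).map (fun t => transfer a b (n + N - 1 - t) z)).prod

/-!
`B_j(z) - B_j(0)` has the single entry `z / a_j`, and
`X_{N+1}(z) - X_{N+1}(0) = B(z) (X_N(z) - X_N(0)) + (B(z) - B(0)) X_N(0)`,
so induction on `N` gives `‖X_N(z) - X_N(0)‖ ≤ (2C)^N |z| ∑_{j<N} 1/a_{n+j}` when `C ≥ 1` bounds
the transfer matrices; the `2` is the submultiplicativity constant of the entrywise sup norm on
`2 × 2` matrices. Compactness of `K` bounds `|z|`, and the summable case follows by adding up `N`
shifted copies of `∑ 1/a_n`.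
-/

theorem Matrix.norm_mul_le_card_mul {l m n α : Type*} [Fintype l] [Fintype m] [Fintype n]
    [NormedRing α] (A : Matrix l m α) (B : Matrix m n α) :
    ‖A * B‖ ≤ Fintype.card m * ‖A‖ * ‖B‖ := by
  rw [Matrix.norm_le_iff (by positivity)]
  intro i k
  calc ‖(A * B) i k‖ ≤ ∑ j, ‖A i j‖ * ‖B j k‖ :=
        (norm_sum_le _ _).trans (Finset.sum_le_sum fun j _ => norm_mul_le _ _)
    _ ≤ ∑ _j : m, ‖A‖ * ‖B‖ := by
        gcongr <;> exact Matrix.norm_entry_le_entrywise_sup_norm _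
    _ = Fintype.card m * ‖A‖ * ‖B‖ := by simp [mul_assoc]

theorem Matrix.norm_single {m n α : Type*} [Fintype m] [Fintype n] [DecidableEq m]
    [DecidableEq n] [NormedAddCommGroup α] (i : m) (j : n) (c : α) :
    ‖Matrix.single i j c‖ = ‖c‖ := by
  refine le_antisymm ((Matrix.norm_le_iff (norm_nonneg c)).2 fun i' j' => ?_) ?_
  · by_cases h : i = i' ∧ j = j'
    · rw [h.1, h.2, Matrix.single_apply_same]
    · simp [Matrix.single_apply_of_ne i j c i' j' h]
  · simpa using Matrix.norm_entry_le_entrywise_sup_norm (Matrix.single i j c) (i := i) (j := j)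

theorem norm_mul_le_two_mul (A B : Matrix (Fin 2) (Fin 2) ℂ) : ‖A * B‖ ≤ 2 * ‖A‖ * ‖B‖ := by
  simpa using Matrix.norm_mul_le_card_mul A B

theorem transfer_sub_transfer_zero (a b : ℕ → ℝ) (j : ℕ) (z : ℂ) :
    transfer a b j z - transfer a b j 0 = Matrix.single 1 1 (z / a j) := by
  ext i k
  fin_cases i <;> fin_cases k <;> simp [transfer]
  ring

theorem norm_transfer_sub_transfer_zero (a b : ℕ → ℝ) (j : ℕ) (z : ℂ) :
    ‖transfer a b j z - transfer a b j 0‖ = ‖z‖ / |a j| := by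
  rw [transfer_sub_transfer_zero, Matrix.norm_single, norm_div, Complex.norm_real,
    Real.norm_eq_abs]

theorem Xmat_zero (a b : ℕ → ℝ) (n : ℕ) (z : ℂ) : Xmat a b 0 n z = 1 := rfl

theorem Xmat_succ (a b : ℕ → ℝ) (N n : ℕ) (z : ℂ) :
    Xmat a b (N + 1) n z = transfer a b (n + N) z * Xmat a b N n z := by
  simp only [Xmat, List.range_succ_eq_map, List.map_cons, List.prod_cons, List.map_map]
  congr 2
  refine List.map_congr_left fun t _ => ?_
  simp only [Function.comp_apply]
  congr 1
  omega

section Bounds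

variable {a b : ℕ → ℝ} {n : ℕ} {z : ℂ} {C : ℝ}

theorem norm_Xmat_le (hB : ∀ j, n ≤ j → ‖transfer a b j z‖ ≤ C) (N : ℕ) :
    ‖Xmat a b N n z‖ ≤ (2 * C) ^ N := by
  induction N with
  | zero => simp [Xmat_zero]
  | succ N ih =>
    have hBN := hB (n + N) (Nat.le_add_right n N)
    have hC : 0 ≤ C := (norm_nonneg _).trans hBN
    calc ‖Xmat a b (N + 1) n z‖ ≤ 2 * ‖transfer a b (n + N) z‖ * ‖Xmat a b N n z‖ := by
          rw [Xmat_succ]; exact norm_mul_le_two_mul _ _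
      _ ≤ 2 * C * (2 * C) ^ N := by gcongr
      _ = (2 * C) ^ (N + 1) := by ring

theorem norm_Xmat_sub_Xmat_zero_le (ha : ∀ j, 0 < a j) (hC : 1 ≤ C)
    (hBz : ∀ j, n ≤ j → ‖transfer a b j z‖ ≤ C) (hB0 : ∀ j, n ≤ j → ‖transfer a b j 0‖ ≤ C)
    (N : ℕ) :
    ‖Xmat a b N n z - Xmat a b N n 0‖ ≤
      (2 * C) ^ N * ‖z‖ * ∑ j ∈ Finset.range N, 1 / a (n + j) := by
  induction N with
  | zero => simp [Xmat_zero]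
  | succ N ih =>
    have haN := ha (n + N)
    have hC₀ : 0 ≤ C := zero_le_one.trans hC
    set B := transfer a b (n + N) z
    set B₀ := transfer a b (n + N) 0
    set X := Xmat a b N n z
    set X₀ := Xmat a b N n 0
    set S := ∑ j ∈ Finset.range N, 1 / a (n + j)
    have hdecomp : Xmat a b (N + 1) n z - Xmat a b (N + 1) n 0 = B * (X - X₀) + (B - B₀) * X₀ := by
      rw [Xmat_succ, Xmat_succ]; noncomm_ring
    have hstep : ‖B - B₀‖ ≤ ‖z‖ * (1 / a (n + N)) := by
      rw [norm_transfer_sub_transfer_zero, abs_of_pos haN, mul_one_div]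
    calc ‖Xmat a b (N + 1) n z - Xmat a b (N + 1) n 0‖
        ≤ 2 * ‖B‖ * ‖X - X₀‖ + 2 * ‖B - B₀‖ * ‖X₀‖ := by
          rw [hdecomp]
          exact (norm_add_le _ _).trans
            (add_le_add (norm_mul_le_two_mul _ _) (norm_mul_le_two_mul _ _))
      _ ≤ 2 * C * ((2 * C) ^ N * ‖z‖ * S) + 2 * (‖z‖ * (1 / a (n + N))) * (2 * C) ^ N := by
          gcongr
          exacts [hBz _ (Nat.le_add_right n N), norm_Xmat_le hB0 N]
      _ = 2 * C * ((2 * C) ^ N * ‖z‖ * S) + 2 * ((2 * C) ^ N * ‖z‖ * (1 / a (n + N))) := by ring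
      _ ≤ 2 * C * ((2 * C) ^ N * ‖z‖ * S) + 2 * C * ((2 * C) ^ N * ‖z‖ * (1 / a (n + N))) := by
          gcongr
          linarith
      _ = (2 * C) ^ (N + 1) * ‖z‖ * ∑ j ∈ Finset.range (N + 1), 1 / a (n + j) := by
          rw [Finset.sum_range_succ]; ring

end Bounds

theorem xmat_close_to_xmat_zero_general
    (a : ℕ → ℝ) (b : ℕ → ℝ) (hapos : ∀ n, 0 < a n) (N : ℕ)
    (K : Set ℂ) (hK : IsCompact K) (h0K : (0 : ℂ) ∈ K)
    (hbdd : ∃ C : ℝ, ∀ n, 1 ≤ n → ∀ z ∈ K, ‖transfer a b n z‖ ≤ C) :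
    (∃ c > 0, ∀ n, 1 ≤ n → ∀ z ∈ K,
        ‖Xmat a b N n z - Xmat a b N n 0‖ ≤ c * ∑ j ∈ Finset.range N, 1 / a (n + j)) ∧
    (Summable (fun n => 1 / a n) →
      Summable (fun n => ⨆ z : K, ‖Xmat a b N n (z : ℂ) - Xmat a b N n 0‖)) := by
  obtain ⟨C, hC⟩ := hbdd
  obtain ⟨M, hM⟩ := hK.isBounded.exists_norm_le
  have hB : ∀ n, 1 ≤ n → ∀ z ∈ K, ∀ j, n ≤ j → ‖transfer a b j z‖ ≤ max C 1 :=
    fun n hn z hz j hj => (hC j (hn.trans hj) z hz).trans (le_max_left _ _)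
  have hbound : ∀ n, 1 ≤ n → ∀ z ∈ K, ‖Xmat a b N n z - Xmat a b N n 0‖ ≤
      (2 * max C 1) ^ N * max M 1 * ∑ j ∈ Finset.range N, 1 / a (n + j) := by
    intro n hn z hz
    have hS : 0 ≤ ∑ j ∈ Finset.range N, 1 / a (n + j) :=
      Finset.sum_nonneg fun j _ => (one_div_pos.2 (hapos _)).le
    refine (norm_Xmat_sub_Xmat_zero_le hapos (le_max_right C 1) (hB n hn z hz)
      (hB n hn 0 h0K) N).trans ?_
    gcongr
    exact (hM z hz).trans (le_max_left _ _)
  refine ⟨⟨_, by positivity, hbound⟩, fun hsum => ?_⟩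
  have : Nonempty K := ⟨⟨0, h0K⟩⟩
  have hwindow : Summable fun n => ∑ j ∈ Finset.range N, 1 / a (n + j) :=
    summable_sum fun j _ => (summable_nat_add_iff j).2 hsum
  rw [← summable_nat_add_iff 1]
  refine (((summable_nat_add_iff 1).2 hwindow).mul_left ((2 * max C 1) ^ N * max M 1)).of_nonneg_of_le
    (fun n => Real.iSup_nonneg fun z => norm_nonneg _) fun n => ?_
  exact ciSup_le fun z => hbound (n + 1) (Nat.le_add_left 1 n) z z.2

/-- If the transfer matrices are uniformly bounded on a compact `K ∋ 0`, then
`‖X_n(z) − X_n(0)‖ ≤ c ∑_{j=0}^{N−1} 1/a_{n+j}` uniformly on `K`; in particular, in the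
non-Carleman case the deviations are summable uniformly on `K`. -/
theorem xmat_close_to_xmat_zero
    (a : ℕ → ℝ) (b : ℕ → ℝ) (hapos : ∀ n, 0 < a n) (N : ℕ) (hN : 0 < N)
    (K : Set ℂ) (hK : IsCompact K) (h0K : (0 : ℂ) ∈ K)
    (hbdd : ∃ C : ℝ, ∀ n, 1 ≤ n → ∀ z ∈ K, ‖transfer a b n z‖ ≤ C) :
    (∃ c > 0, ∀ n, 1 ≤ n → ∀ z ∈ K,
        ‖Xmat a b N n z - Xmat a b N n 0‖ ≤ c * ∑ j ∈ Finset.range N, 1 / a (n + j)) ∧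
    (Summable (fun n => 1 / a n) →
      Summable (fun n => ⨆ z : K, ‖Xmat a b N n (z : ℂ) - Xmat a b N n 0‖)) :=
  xmat_close_to_xmat_zero_general a b hapos N K hK h0K hbdd
end

section
/- Suppose Σ_{n=0}^∞ 1/a_n < ∞ (with a_n > 0), the sequence (a_n/√(a_{n−1}a_{n+1}) − 1) is absolutely summable, and (b_n/√(a_{n−1}a_n)) is bounded with absolutely summable differences. Then (√(a_{n+1}/a_n)) is bounded with absolutely summable differences, lim_n a_{n−1}/a_n =: r exists with r ∈ (0,1], lim_n b_n/a_n =: s exists, and if q := lim_n b_n/(2√(a_{n−1}a_n)) then s = 2q√r; consequently discr of the limit transfer matrix B = [[0,1],[−r,−s]] equals s² − 4r = 4r(q−1)(q+1), which is nonzero whenever |q| ≠ 1. -/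
/-!
Put `c n = √(a (n+1) / a n)`. The ratio hypothesis says exactly that `c n / c (n+1) - 1` is
absolutely summable, so `∑ log (c n / c (n+1))` converges and `log c` telescopes to a limit:
`c → L > 0`, which gives the bound and the summable differences of `c`, and
`a n / a (n+1) = c n⁻² → L⁻² =: r`. Since `∑ 1 / a n < ∞` forces `a → ∞`, the ratios
`a (n+1) / a n` cannot eventually stay below `1`, hence `L ≥ 1` and `r ≤ 1`. The normalised
diagonal `d n = b (n+1) / √(a n a (n+1))` has summable differences, so `d → 2q`, and
`b (n+1) / a (n+1) = d n / c n → 2q / L = 2q√r`.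
-/

open Filter Topology Real

lemma exists_pos_tendsto_of_summable_div_sub_one {c : ℕ → ℝ} (hc : ∀ n, 0 < c n)
    (h : Summable fun n => c n / c (n + 1) - 1) : ∃ L, 0 < L ∧ Tendsto c atTop (𝓝 L) := by
  have hlog : Summable fun n => log (c n / c (n + 1)) := by
    simpa using Real.summable_log_one_add_of_summable h
  have htelescope : ∀ n, ∑ k ∈ Finset.range n, log (c k / c (k + 1)) = log (c 0) - log (c n) :=
    fun n => (Finset.sum_congr rfl fun k _ => log_div (hc k).ne' (hc (k + 1)).ne').trans
      (Finset.sum_range_sub' (fun k => log (c k)) n)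
  have hlogc : Tendsto (fun n => log (c n)) atTop (𝓝 (log (c 0) - ∑' n, log (c n / c (n + 1)))) :=
    (tendsto_const_nhds.sub hlog.hasSum.tendsto_sum_nat).congr fun n => by rw [htelescope]; ring
  exact ⟨_, exp_pos _, hlogc.rexp.congr fun n => exp_log (hc n)⟩

lemma summable_abs_sub_of_summable_abs_div_sub_one {c : ℕ → ℝ} {C : ℝ} (hc : ∀ n, 0 < c n)
    (hC : ∀ n, c n ≤ C) (h : Summable fun n => |c n / c (n + 1) - 1|) :
    Summable fun n => |c (n + 1) - c n| := by
  refine (h.mul_left C).of_nonneg_of_le (fun n => abs_nonneg _) fun n => ?_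
  have hfactor : c (n + 1) - c n = -(c (n + 1) * (c n / c (n + 1) - 1)) := by
    field_simp [(hc (n + 1)).ne']
    ring
  rw [hfactor, abs_neg, abs_mul, abs_of_pos (hc (n + 1))]
  exact mul_le_mul_of_nonneg_right (hC (n + 1)) (abs_nonneg _)

lemma tendsto_atTop_of_summable_one_div {a : ℕ → ℝ} (ha : ∀ n, 0 < a n)
    (h : Summable fun n => 1 / a n) : Tendsto a atTop atTop := by
  have hinv : Tendsto (fun n => 1 / a n) atTop (𝓝[>] 0) :=
    tendsto_nhdsWithin_iff.2 ⟨h.tendsto_atTop_zero, .of_forall fun n => one_div_pos.2 (ha n)⟩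
  exact hinv.inv_tendsto_nhdsGT_zero.congr fun n => by simp

lemma one_le_of_tendsto_succ_div_of_tendsto_atTop {a : ℕ → ℝ} {ρ : ℝ}
    (hρ : Tendsto (fun n => a (n + 1) / a n) atTop (𝓝 ρ)) (ha : Tendsto a atTop atTop) :
    1 ≤ ρ := by
  by_contra! hρ1
  obtain ⟨N, hN⟩ := eventually_atTop.1
    ((hρ.eventually (eventually_lt_nhds hρ1)).and (ha.eventually_gt_atTop 0))
  have hdecr : ∀ n ≥ N, a n ≤ a N := by
    intro n hn
    induction n, hn using Nat.le_induction with
    | base => exact le_rfl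
    | succ n hn ih => exact ((div_lt_one (hN n hn).2).1 (hN n hn).1).le.trans ih
  obtain ⟨n, hlarge, hn⟩ := ((ha.eventually_gt_atTop (a N)).and (eventually_ge_atTop N)).exists
  exact (hdecr n hn).not_gt hlarge

lemma sqrt_div_div_sqrt_div {p q r : ℝ} (hp : 0 < p) (hq : 0 < q) (hr : 0 < r) :
    √(q / p) / √(r / q) = q / √(p * r) := by
  obtain ⟨u, hu, rfl⟩ : ∃ u, 0 < u ∧ p = u ^ 2 := ⟨√p, sqrt_pos.2 hp, (sq_sqrt hp.le).symm⟩
  obtain ⟨v, hv, rfl⟩ : ∃ v, 0 < v ∧ q = v ^ 2 := ⟨√q, sqrt_pos.2 hq, (sq_sqrt hq.le).symm⟩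
  obtain ⟨w, hw, rfl⟩ : ∃ w, 0 < w ∧ r = w ^ 2 := ⟨√r, sqrt_pos.2 hr, (sq_sqrt hr.le).symm⟩
  rw [← div_pow, ← div_pow, ← mul_pow, sqrt_sq (by positivity), sqrt_sq (by positivity),
    sqrt_sq (by positivity)]
  field_simp

lemma div_sqrt_mul_div_sqrt_div {p q : ℝ} (β : ℝ) (hp : 0 < p) (hq : 0 < q) :
    β / √(p * q) / √(q / p) = β / q := by
  obtain ⟨u, hu, rfl⟩ : ∃ u, 0 < u ∧ p = u ^ 2 := ⟨√p, sqrt_pos.2 hp, (sq_sqrt hp.le).symm⟩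
  obtain ⟨v, hv, rfl⟩ : ∃ v, 0 < v ∧ q = v ^ 2 := ⟨√q, sqrt_pos.2 hq, (sq_sqrt hq.le).symm⟩
  rw [← div_pow, ← mul_pow, sqrt_sq (by positivity), sqrt_sq (by positivity)]
  field_simp

lemma sq_sub_four_mul_eq_of_eq_two_mul_sqrt {q r s : ℝ} (hr : 0 ≤ r) (hs : s = 2 * q * √r) :
    s ^ 2 - 4 * r = 4 * r * (q - 1) * (q + 1) := by
  rw [hs, mul_pow, sq_sqrt hr]
  ring

lemma four_mul_sub_one_mul_add_one_ne_zero {q r : ℝ} (hr : r ≠ 0) (hq : |q| ≠ 1) :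
    4 * r * (q - 1) * (q + 1) ≠ 0 := by
  have hq1 : q - 1 ≠ 0 := fun h => hq (by rw [sub_eq_zero.1 h, abs_one])
  have hq2 : q + 1 ≠ 0 := fun h => hq (by rw [eq_neg_of_add_eq_zero_left h, abs_neg, abs_one])
  exact mul_ne_zero (mul_ne_zero (mul_ne_zero four_ne_zero hr) hq1) hq2

theorem yafaev_class_limits_general
    (a : ℕ → ℝ) (b : ℕ → ℝ) (hapos : ∀ n, 0 < a n)
    (hnotCarleman : Summable (fun n => 1 / a n))
    (hratio : Summable (fun n => |a (n + 1) / Real.sqrt (a n * a (n + 2)) - 1|))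
    (hbdiff : Summable (fun n =>
      |b (n + 2) / Real.sqrt (a (n + 1) * a (n + 2)) -
        b (n + 1) / Real.sqrt (a n * a (n + 1))|)) :
    ((∃ C : ℝ, ∀ n, Real.sqrt (a (n + 1) / a n) ≤ C) ∧
      Summable (fun n =>
        |Real.sqrt (a (n + 2) / a (n + 1)) - Real.sqrt (a (n + 1) / a n)|)) ∧
    ∃ r s : ℝ, 0 < r ∧ r ≤ 1 ∧
      Tendsto (fun n => a n / a (n + 1)) atTop (nhds r) ∧
      Tendsto (fun n => b (n + 1) / a (n + 1)) atTop (nhds s) ∧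
      ∀ q : ℝ,
        Tendsto (fun n => b (n + 1) / (2 * Real.sqrt (a n * a (n + 1)))) atTop (nhds q) →
          s = 2 * q * Real.sqrt r ∧
          s ^ 2 - 4 * r = 4 * r * (q - 1) * (q + 1) ∧
          (|q| ≠ 1 → s ^ 2 - 4 * r ≠ 0) := by
  have hc : ∀ n, 0 < √(a (n + 1) / a n) := fun n => sqrt_pos.2 (div_pos (hapos _) (hapos _))
  have hcsq : ∀ n, √(a (n + 1) / a n) ^ 2 = a (n + 1) / a n :=
    fun n => sq_sqrt (div_pos (hapos _) (hapos _)).le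
  have hratio' : Summable fun n => |√(a (n + 1) / a n) / √(a (n + 2) / a (n + 1)) - 1| := by
    simpa only [sqrt_div_div_sqrt_div (hapos _) (hapos _) (hapos _)] using hratio
  obtain ⟨L, hL0, hL⟩ := exists_pos_tendsto_of_summable_div_sub_one hc hratio'.of_abs
  have hL1 : 1 ≤ L ^ 2 := one_le_of_tendsto_succ_div_of_tendsto_atTop
    ((hL.pow 2).congr hcsq) (tendsto_atTop_of_summable_one_div hapos hnotCarleman)
  obtain ⟨D, hD⟩ := cauchySeq_tendsto_of_complete <| cauchySeq_of_summable_dist <|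
    hbdiff.congr fun n => by rw [Real.dist_eq, abs_sub_comm]
  obtain ⟨C, hC⟩ := hL.bddAbove_range
  have hcC : ∀ n, √(a (n + 1) / a n) ≤ C := fun n => hC ⟨n, rfl⟩
  have hcdiff : Summable fun n => |√(a (n + 2) / a (n + 1)) - √(a (n + 1) / a n)| :=
    summable_abs_sub_of_summable_abs_div_sub_one (c := fun n => √(a (n + 1) / a n)) hc hcC hratio'
  have hr : Tendsto (fun n => a n / a (n + 1)) atTop (𝓝 (L ^ 2)⁻¹) :=
    ((hL.pow 2).inv₀ (by positivity)).congr fun n => by rw [hcsq, inv_div]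
  have hs : Tendsto (fun n => b (n + 1) / a (n + 1)) atTop (𝓝 (D / L)) :=
    (hD.div hL hL0.ne').congr fun n => div_sqrt_mul_div_sqrt_div _ (hapos _) (hapos _)
  refine ⟨⟨⟨C, hcC⟩, hcdiff⟩, (L ^ 2)⁻¹, D / L, by positivity, inv_le_one_of_one_le₀ hL1, hr, hs,
    fun q hq => ?_⟩
  have hDq : D / 2 = q := tendsto_nhds_unique (hD.div_const 2) (hq.congr fun n => by ring)
  have hsq : D / L = 2 * q * √((L ^ 2)⁻¹) := by
    rw [sqrt_inv, sqrt_sq hL0.le, ← hDq]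
    ring
  have hdiscr := sq_sub_four_mul_eq_of_eq_two_mul_sqrt (by positivity) hsq
  exact ⟨hsq, hdiscr, fun hq1 => hdiscr ▸ four_mul_sub_one_mul_add_one_ne_zero (by positivity) hq1⟩

/-- Yafaev-type regularity: limits of the transfer-matrix data in the non-Carleman case. -/
theorem yafaev_class_limits
    (a : ℕ → ℝ) (b : ℕ → ℝ) (hapos : ∀ n, 0 < a n)
    (hnotCarleman : Summable (fun n => 1 / a n))
    (hratio : Summable (fun n => |a (n + 1) / Real.sqrt (a n * a (n + 2)) - 1|))
    (hbbdd : ∃ C : ℝ, ∀ n, |b (n + 1) / Real.sqrt (a n * a (n + 1))| ≤ C)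
    (hbdiff : Summable (fun n =>
      |b (n + 2) / Real.sqrt (a (n + 1) * a (n + 2)) -
        b (n + 1) / Real.sqrt (a n * a (n + 1))|)) :
    ((∃ C : ℝ, ∀ n, Real.sqrt (a (n + 1) / a n) ≤ C) ∧
      Summable (fun n =>
        |Real.sqrt (a (n + 2) / a (n + 1)) - Real.sqrt (a (n + 1) / a n)|)) ∧
    ∃ r s : ℝ, 0 < r ∧ r ≤ 1 ∧
      Tendsto (fun n => a n / a (n + 1)) atTop (nhds r) ∧
      Tendsto (fun n => b (n + 1) / a (n + 1)) atTop (nhds s) ∧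
      ∀ q : ℝ,
        Tendsto (fun n => b (n + 1) / (2 * Real.sqrt (a n * a (n + 1)))) atTop (nhds q) →
          s = 2 * q * Real.sqrt r ∧
          s ^ 2 - 4 * r = 4 * r * (q - 1) * (q + 1) ∧
          (|q| ≠ 1 → s ^ 2 - 4 * r ≠ 0) :=
  yafaev_class_limits_general a b hapos hnotCarleman hratio hbdiff
end

section
/- Let σ ∈ {−1,1}, δ > 0, and suppose R_n are real 2×2 matrices with discr R_n ≥ δ² and γ_n ≥ δ positive numbers. Define the eigenvalues ξ_n^± = (tr R_n ± σ√(discr R_n))/2 of R_n and λ_n^± = σ + ξ_n^±/γ_n. Then for all sufficiently large n (depending only on uniform bounds on ‖R_n‖ and a lower bound √(discr R_n) ≥ δ), |λ_n^+/λ_n^−| ≥ 1 + √(discr R_n)/(2γ_n) ≥ exp(δ/(4γ_n)). Consequently, ∏_{n=n₁}^{n₂} |λ_n^+/λ_n^−| ≥ exp((δ/4) Σ_{n=n₁}^{n₂} 1/γ_n). -/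
open Filter

attribute [local instance] Matrix.normedAddCommGroup

/-- Discriminant of a real 2×2 matrix. -/
def discr (M : Matrix (Fin 2) (Fin 2) ℝ) : ℝ := (Matrix.trace M) ^ 2 - 4 * M.det

/-- Uniform Levinson condition: for `X_n = σId + γ_n⁻¹ R_n` with `discr R_n ≥ δ²` and
bounded `R_n`, the eigenvalue ratios satisfy
`|λ_n⁺/λ_n⁻| ≥ 1 + √(discr R_n)/(2γ_n) ≥ exp(δ/(4γ_n))` for large `n`, and hence the
products grow like `exp((δ/4) ∑ 1/γ_n)`. -/
theorem eigenvalue_ratio_lower_bound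
    (σ : ℝ) (hσ : σ = 1 ∨ σ = -1) (δ : ℝ) (hδ : 0 < δ)
    (R : ℕ → Matrix (Fin 2) (Fin 2) ℝ)
    (hdiscr : ∀ n, δ ^ 2 ≤ discr (R n))
    (γ : ℕ → ℝ) (hγδ : ∀ n, δ ≤ γ n) (hγtop : Tendsto γ atTop atTop)
    (hRbdd : ∃ C : ℝ, ∀ n, ‖R n‖ ≤ C)
    (ξp ξm : ℕ → ℝ)
    (hξp : ∀ n, ξp n = (Matrix.trace (R n) + σ * Real.sqrt (discr (R n))) / 2)
    (hξm : ∀ n, ξm n = (Matrix.trace (R n) - σ * Real.sqrt (discr (R n))) / 2)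
    (lp lm : ℕ → ℝ)
    (hlp : ∀ n, lp n = σ + ξp n / γ n) (hlm : ∀ n, lm n = σ + ξm n / γ n) :
    ∃ n₀ : ℕ,
      (∀ n, n₀ ≤ n →
        1 + Real.sqrt (discr (R n)) / (2 * γ n) ≤ |lp n / lm n| ∧
        Real.exp (δ / (4 * γ n)) ≤ 1 + Real.sqrt (discr (R n)) / (2 * γ n)) ∧
      (∀ n₁ n₂, n₀ ≤ n₁ → n₁ ≤ n₂ →
        Real.exp (δ / 4 * ∑ n ∈ Finset.Icc n₁ n₂, 1 / γ n) ≤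
          ∏ n ∈ Finset.Icc n₁ n₂, |lp n / lm n|) := by
  obtain ⟨C, hC⟩ := hRbdd
  have hC0 : 0 ≤ C := le_trans (norm_nonneg _) (hC 0)
  have hσ2 : σ * σ = 1 := by rcases hσ with h | h <;> simp [h]
  have hσne : σ ≠ 0 := by rcases hσ with h | h <;> simp [h]
  have hσabs : |σ| = 1 := by rcases hσ with h | h <;> simp [h]
  have hent : ∀ n i j, |(R n) i j| ≤ C := fun n i j =>
    (Matrix.norm_entry_le_entrywise_sup_norm (R n)).trans (hC n)
  have hsd : ∀ n, Real.sqrt (discr (R n)) ≤ 4 * C := by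
    intro n
    have h1 : discr (R n) ≤ 16 * C ^ 2 := by
      have h00 := abs_le.mp (hent n 0 0); have h01 := abs_le.mp (hent n 0 1)
      have h10 := abs_le.mp (hent n 1 0); have h11 := abs_le.mp (hent n 1 1)
      rw [discr, Matrix.trace_fin_two, Matrix.det_fin_two]
      nlinarith [h00.1, h00.2, h01.1, h01.2, h10.1, h10.2, h11.1, h11.2]
    calc Real.sqrt (discr (R n)) ≤ Real.sqrt (16 * C ^ 2) := Real.sqrt_le_sqrt h1
      _ = 4 * C := by
          rw [show (16:ℝ) * C ^ 2 = (4 * C) ^ 2 by ring, Real.sqrt_sq (by positivity)]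
  have htr : ∀ n, |Matrix.trace (R n)| ≤ 2 * C := by
    intro n
    rw [Matrix.trace_fin_two]
    calc |(R n) 0 0 + (R n) 1 1| ≤ |(R n) 0 0| + |(R n) 1 1| := abs_add_le _ _
      _ ≤ 2 * C := by have := hent n 0 0; have := hent n 1 1; linarith
  have hξmb : ∀ n, |ξm n| ≤ 3 * C := by
    intro n
    rw [hξm n]
    have h1 := abs_le.mp (htr n)
    have h3 : |σ * Real.sqrt (discr (R n))| ≤ 4 * C := by
      rw [abs_mul, hσabs, one_mul, abs_of_nonneg (Real.sqrt_nonneg _)]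
      exact hsd n
    have h3' := abs_le.mp h3
    rw [abs_le]
    constructor <;> [linarith [h1.1, h3'.2]; linarith [h1.2, h3'.1]]
  obtain ⟨n₀, hn₀⟩ := Filter.eventually_atTop.mp (hγtop.eventually_ge_atTop (6 * C + 2))
  have key : ∀ n, n₀ ≤ n →
      1 + Real.sqrt (discr (R n)) / (2 * γ n) ≤ |lp n / lm n| ∧
      Real.exp (δ / (4 * γ n)) ≤ 1 + Real.sqrt (discr (R n)) / (2 * γ n) := by
    intro n hn
    have hγ0 : 0 < γ n := lt_of_lt_of_le hδ (hγδ n)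
    have hγ2 : 6 * C + 2 ≤ γ n := hn₀ n hn
    have hδs : δ ≤ Real.sqrt (discr (R n)) := by
      have := Real.sqrt_le_sqrt (hdiscr n)
      rwa [Real.sqrt_sq hδ.le] at this
    have hs0 : 0 < Real.sqrt (discr (R n)) := lt_of_lt_of_le hδ hδs
    have hξ : |ξm n| ≤ 3 * C := hξmb n
    have hb : |σ * ξm n / γ n| ≤ 1 / 2 := by
      rw [abs_div, abs_mul, hσabs, one_mul, abs_of_pos hγ0, div_le_iff₀ hγ0]
      linarith
    have hb' := abs_le.mp hb
    have hb1 : (1:ℝ)/2 ≤ 1 + σ * ξm n / γ n := by linarith [hb'.1]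
    have hb2 : 1 + σ * ξm n / γ n ≤ 2 := by linarith [hb'.2]
    have hb0 : (0:ℝ) < 1 + σ * ξm n / γ n := by linarith
    have hlm' : σ * lm n = 1 + σ * ξm n / γ n := by
      rw [hlm n]
      linear_combination hσ2
    have hlp' : σ * lp n = 1 + σ * ξm n / γ n + Real.sqrt (discr (R n)) / γ n := by
      rw [hlp n, hξp n, hξm n]
      linear_combination (1 + Real.sqrt (discr (R n)) / γ n) * hσ2
    have hratio : lp n / lm n =
        (1 + σ * ξm n / γ n + Real.sqrt (discr (R n)) / γ n) / (1 + σ * ξm n / γ n) := by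
      rw [← hlp', ← hlm', mul_div_mul_left _ _ hσne]
    have hmain : 1 + Real.sqrt (discr (R n)) / (2 * γ n) ≤ lp n / lm n := by
      rw [hratio, le_div_iff₀ hb0]
      have hu : 0 ≤ Real.sqrt (discr (R n)) / γ n := by positivity
      have h2 : Real.sqrt (discr (R n)) / (2 * γ n) = (Real.sqrt (discr (R n)) / γ n) / 2 := by
        ring
      rw [h2]
      nlinarith [hu, hb2, hb0]
    constructor
    · exact hmain.trans (le_abs_self _)
    · have h14 : (0:ℝ) < 1 - δ / γ n / 4 := by
        have ht1 : δ / γ n ≤ 1 := (div_le_one hγ0).mpr (hγδ n)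
        linarith
      have ht1 : δ / γ n ≤ 1 := (div_le_one hγ0).mpr (hγδ n)
      have ht0 : 0 < δ / γ n := div_pos hδ hγ0
      have h2 : 1 - δ / γ n / 4 ≤ Real.exp (-(δ / (4 * γ n))) := by
        have h := Real.add_one_le_exp (-(δ / (4 * γ n)))
        have he : δ / (4 * γ n) = δ / γ n / 4 := by ring
        linarith
      have h3 : Real.exp (δ / (4 * γ n)) * (1 - δ / γ n / 4) ≤ 1 := by
        calc Real.exp (δ / (4 * γ n)) * (1 - δ / γ n / 4)
            ≤ Real.exp (δ / (4 * γ n)) * Real.exp (-(δ / (4 * γ n))) :=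
              mul_le_mul_of_nonneg_left h2 (Real.exp_pos _).le
          _ = 1 := by rw [← Real.exp_add]; simp
      have h4 : Real.exp (δ / (4 * γ n)) ≤ 1 / (1 - δ / γ n / 4) := by
        rw [le_div_iff₀ h14]; exact h3
      have h5 : 1 / (1 - δ / γ n / 4) ≤ 1 + δ / γ n / 2 := by
        rw [div_le_iff₀ h14]; nlinarith
      have h6 : 1 + δ / γ n / 2 ≤ 1 + Real.sqrt (discr (R n)) / (2 * γ n) := by
        have he : δ / γ n / 2 = δ / (2 * γ n) := by ring
        rw [he]
        gcongr
      linarith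
  refine ⟨n₀, key, ?_⟩
  intro n₁ n₂ h1 _h2
  calc Real.exp (δ / 4 * ∑ n ∈ Finset.Icc n₁ n₂, 1 / γ n)
      = ∏ n ∈ Finset.Icc n₁ n₂, Real.exp (δ / (4 * γ n)) := by
        rw [Finset.mul_sum, Real.exp_sum]
        exact Finset.prod_congr rfl fun n _ => by
          rw [show δ / 4 * (1 / γ n) = δ / (4 * γ n) by ring]
    _ ≤ ∏ n ∈ Finset.Icc n₁ n₂, |lp n / lm n| := by
        apply Finset.prod_le_prod (fun n _ => (Real.exp_pos _).le)
        intro n hn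
        have hn' : n₀ ≤ n := le_trans h1 (Finset.mem_Icc.mp hn).1
        exact ((key n hn').2).trans ((key n hn').1)
end
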